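/- arXiv:1802.08439 — 2 statements merged into one kernel-verified Lean document; each statement's English description precedes it below -/
import Mathlib

section
/- Let (X, ℬ, μ, T) be a conservative, measure-preserving transformation of a σ-finite measure space, and let f, g ∈ L¹(X, μ) with f > 0 and g > 0 μ-almost everywhere. Then, μ-almost everywhere, 0 < liminf_{n→∞} S_n f / S_n g and limsup_{n→∞} S_n f / S_n g < +∞. -/
open MeasureTheory Filter Topology

/-- `T` is conservative w.r.t. `μ`: every set of positive measure returns to itself. -/
def IsConservative {X : Type*} [MeasurableSpace X] (T : X → X) (μ : Measure X) : Prop :=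
  ∀ A : Set X, MeasurableSet A → 0 < μ A → ∃ n ≥ 1, 0 < μ (A ∩ (T^[n]) ⁻¹' A)

/-- Birkhoff sum `S_n f = ∑_{k<n} f ∘ T^k`. -/
noncomputable def birkhoff {X : Type*} (T : X → X) (f : X → ℝ) (n : ℕ) (x : X) : ℝ :=
  ∑ k ∈ Finset.range n, f (T^[k] x)

section HopfAux

variable {X : Type*} [MeasurableSpace X] {μ : Measure X} {T : X → X} {h f g : X → ℝ}

/-- Running maximum `max (0, S₁h, …, S_N h)`. -/
noncomputable def maxS (T : X → X) (h : X → ℝ) : ℕ → X → ℝ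
  | 0, _ => 0
  | (N + 1), x => max (maxS T h N x) (birkhoffSum T h (N + 1) x)

lemma maxS_zero (x : X) : maxS T h 0 x = 0 := rfl

lemma maxS_succ (N : ℕ) (x : X) :
    maxS T h (N + 1) x = max (maxS T h N x) (birkhoffSum T h (N + 1) x) := rfl

lemma maxS_nonneg (N : ℕ) (x : X) : 0 ≤ maxS T h N x := by
  induction N with
  | zero => simp [maxS_zero]
  | succ N ih => exact ih.trans (le_max_left _ _)

lemma maxS_le_succ (N : ℕ) (x : X) : maxS T h N x ≤ maxS T h (N + 1) x :=
  le_max_left _ _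

lemma maxS_mono (x : X) : Monotone fun N => maxS T h N x :=
  monotone_nat_of_le_succ fun N => maxS_le_succ N x

lemma birkhoffSum_le_maxS {n N : ℕ} (hn : n ≤ N) (x : X) :
    birkhoffSum T h n x ≤ maxS T h N x := by
  induction N with
  | zero =>
    obtain rfl : n = 0 := Nat.le_zero.mp hn
    simp [maxS_zero, birkhoffSum_zero]
  | succ N ih =>
    rcases Nat.lt_succ_iff_lt_or_eq.mp (Nat.lt_succ_of_le hn) with h' | rfl
    · exact (ih (Nat.lt_succ_iff.mp h')).trans (le_max_left _ _)
    · exact le_max_right _ _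

lemma exists_maxS_eq (N : ℕ) (x : X) :
    ∃ n ≤ N, maxS T h N x = birkhoffSum T h n x := by
  induction N with
  | zero => exact ⟨0, le_refl 0, (birkhoffSum_zero _ _ _).symm⟩
  | succ N ih =>
    obtain ⟨n, hn, he⟩ := ih
    rcases max_cases (maxS T h N x) (birkhoffSum T h (N + 1) x) with ⟨hm, _⟩ | ⟨hm, _⟩
    · exact ⟨n, hn.trans (Nat.le_succ N), by rw [maxS_succ, hm, he]⟩
    · exact ⟨N + 1, le_refl _, by rw [maxS_succ, hm]⟩

lemma maxS_succ_eq (N : ℕ) (x : X) :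
    maxS T h (N + 1) x = max 0 (h x + maxS T h N (T x)) := by
  induction N generalizing x with
  | zero => simp [maxS_succ, maxS_zero, birkhoffSum_one]
  | succ N ih =>
    rw [maxS_succ, ih, birkhoffSum_succ', maxS_succ, max_assoc, max_add_add_left]

lemma measurable_birkhoffSum (hTm : Measurable T) (hm : Measurable h) (n : ℕ) :
    Measurable (birkhoffSum T h n) := by
  show Measurable fun x => ∑ k ∈ Finset.range n, h (T^[k] x)
  exact Finset.measurable_sum _ fun k _ => hm.comp (hTm.iterate k)

lemma measurable_maxS (hTm : Measurable T) (hm : Measurable h) (N : ℕ) :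
    Measurable (maxS T h N) := by
  induction N with
  | zero => exact measurable_const
  | succ N ih => exact ih.max (measurable_birkhoffSum hTm hm (N + 1))

lemma integrable_comp_iterate (hT : MeasurePreserving T μ μ) (hh : Integrable h μ) (k : ℕ) :
    Integrable (fun x => h (T^[k] x)) μ :=
  ((hT.iterate k).integrable_comp hh.aestronglyMeasurable).mpr hh

lemma integrable_birkhoffSum (hT : MeasurePreserving T μ μ) (hh : Integrable h μ) (n : ℕ) :
    Integrable (birkhoffSum T h n) μ := by
  show Integrable (fun x => ∑ k ∈ Finset.range n, h (T^[k] x)) μ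
  exact integrable_finset_sum _ fun k _ => integrable_comp_iterate hT hh k

lemma integrable_maxS (hT : MeasurePreserving T μ μ) (hh : Integrable h μ) (N : ℕ) :
    Integrable (maxS T h N) μ := by
  induction N with
  | zero => exact integrable_zero _ _ _
  | succ N ih => exact ih.sup (integrable_birkhoffSum hT hh (N + 1))

/-- Hopf's maximal ergodic lemma. -/
theorem hopf_maximal (hT : MeasurePreserving T μ μ) (hm : Measurable h)
    (hh : Integrable h μ) :
    0 ≤ ∫ x in {x | ∃ n, 1 ≤ n ∧ 0 < birkhoffSum T h n x}, h x ∂μ := by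
  set A : ℕ → Set X := fun N => {x | 0 < maxS T h (N + 1) x} with hA
  have hAmeas : ∀ N, MeasurableSet (A N) :=
    fun N => measurableSet_lt measurable_const (measurable_maxS hT.measurable hm (N + 1))
  have hmono : Monotone A := fun N M hNM x hx =>
    lt_of_lt_of_le hx (maxS_mono x (Nat.succ_le_succ hNM))
  -- Step 1 : each truncated integral is nonnegative
  have step1 : ∀ N, 0 ≤ ∫ x in A N, h x ∂μ := by
    intro N
    have hint1 : Integrable (maxS T h (N + 1)) μ := integrable_maxS hT hh (N + 1)
    have hintN : Integrable (maxS T h N) μ := integrable_maxS hT hh N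
    have hintNT : Integrable (fun x => maxS T h N (T x)) μ :=
      (hT.integrable_comp hintN.aestronglyMeasurable).mpr hintN
    -- on A N, h x = maxS (N+1) x - maxS N (T x)
    have hpt : ∀ x ∈ A N, h x = maxS T h (N + 1) x - maxS T h N (T x) := by
      intro x hx
      have hx' : 0 < maxS T h (N + 1) x := hx
      rw [maxS_succ_eq] at hx' ⊢
      have : max 0 (h x + maxS T h N (T x)) = h x + maxS T h N (T x) := by
        rcases max_cases (0 : ℝ) (h x + maxS T h N (T x)) with ⟨hm1, _⟩ | ⟨hm1, _⟩
        · exact absurd (hm1 ▸ hx') (lt_irrefl 0)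
        · exact hm1
      rw [this]; ring
    have heq : ∫ x in A N, h x ∂μ
        = ∫ x in A N, (maxS T h (N + 1) x - maxS T h N (T x)) ∂μ := by
      refine setIntegral_congr_fun (hAmeas N) ?_
      intro x hx; exact hpt x hx
    have hsub : ∫ x in A N, (maxS T h (N + 1) x - maxS T h N (T x)) ∂μ
        = (∫ x in A N, maxS T h (N + 1) x ∂μ) - ∫ x in A N, maxS T h N (T x) ∂μ :=
      integral_sub hint1.integrableOn hintNT.integrableOn
    have hfull : ∫ x in A N, maxS T h (N + 1) x ∂μ = ∫ x, maxS T h (N + 1) x ∂μ := by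
      have hcompl : ∫ x in (A N)ᶜ, maxS T h (N + 1) x ∂μ = 0 := by
        refine setIntegral_eq_zero_of_forall_eq_zero fun x hx => ?_
        have : ¬ 0 < maxS T h (N + 1) x := hx
        exact le_antisymm (not_lt.mp this) (maxS_nonneg _ _)
      have := integral_add_compl (hAmeas N) hint1
      linarith
    have hTle : ∫ x in A N, maxS T h N (T x) ∂μ ≤ ∫ x, maxS T h N (T x) ∂μ :=
      setIntegral_le_integral hintNT (Eventually.of_forall fun x => maxS_nonneg _ _)
    have hTeq : ∫ x, maxS T h N (T x) ∂μ = ∫ x, maxS T h N x ∂μ := by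
      have := integral_map (f := maxS T h N) hT.measurable.aemeasurable
        (by rw [hT.map_eq]; exact hintN.aestronglyMeasurable)
      rw [hT.map_eq] at this
      exact this.symm
    have hmonoI : ∫ x, maxS T h N x ∂μ ≤ ∫ x, maxS T h (N + 1) x ∂μ :=
      integral_mono hintN hint1 fun x => maxS_le_succ N x
    rw [heq, hsub, hfull]
    linarith
  -- Step 2 : union of the A N's
  have hunion : (⋃ N, A N) = {x | ∃ n, 1 ≤ n ∧ 0 < birkhoffSum T h n x} := by
    ext x
    simp only [Set.mem_iUnion, Set.mem_setOf_eq, hA]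
    constructor
    · rintro ⟨N, hN⟩
      obtain ⟨n, hn, he⟩ := exists_maxS_eq (T := T) (h := h) (N + 1) x
      refine ⟨n, ?_, he ▸ hN⟩
      rcases Nat.eq_zero_or_pos n with rfl | hpos
      · rw [birkhoffSum_zero] at he
        exact absurd (he ▸ hN) (lt_irrefl 0)
      · exact hpos
    · rintro ⟨n, hn1, hn⟩
      refine ⟨n, lt_of_lt_of_le hn ?_⟩
      exact birkhoffSum_le_maxS (Nat.le_succ_of_le (Nat.le_refl n)) x
  have htends := tendsto_setIntegral_of_monotone hAmeas hmono
    (hh.integrableOn : IntegrableOn h (⋃ N, A N) μ)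
  rw [← hunion]
  exact ge_of_tendsto' htends step1

/-- Key estimate: a.e. `x` admits `c` with `Sₙ f ≤ (c+1) Sₙ g` for all `n ≥ 1`. -/
theorem ae_exists_bound (hT : MeasurePreserving T μ μ)
    (hmf : Measurable f) (hmg : Measurable g) (hf : Integrable f μ) (hg : Integrable g μ)
    (hfpos : ∀ᵐ x ∂μ, 0 < f x) (hgpos : ∀ᵐ x ∂μ, 0 < g x) :
    ∀ᵐ x ∂μ, ∃ c : ℕ, ∀ n, 1 ≤ n →
      birkhoffSum T f n x ≤ ((c : ℝ) + 1) * birkhoffSum T g n x := by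
  classical
  set E : ℕ → Set X := fun c =>
    {x | ∃ n, 1 ≤ n ∧ 0 < birkhoffSum T (fun y => f y - ((c : ℝ) + 1) * g y) n x} with hE
  have hlin : ∀ (c : ℕ) (n : ℕ) (x : X),
      birkhoffSum T (fun y => f y - ((c : ℝ) + 1) * g y) n x
        = birkhoffSum T f n x - ((c : ℝ) + 1) * birkhoffSum T g n x := by
    intro c n x
    simp [birkhoffSum, Finset.sum_sub_distrib, Finset.mul_sum]
  have hgnn : 0 ≤ᵐ[μ] g := hgpos.mono fun x hx => hx.le
  have hfnn : 0 ≤ᵐ[μ] f := hfpos.mono fun x hx => hx.le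
  have hbound : ∀ c : ℕ, ((c : ℝ) + 1) * ∫ x in E c, g x ∂μ ≤ ∫ x, f x ∂μ := by
    intro c
    have hint : Integrable (fun y => f y - ((c : ℝ) + 1) * g y) μ :=
      hf.sub (hg.const_mul _)
    have hmeasb : Measurable (fun y => f y - ((c : ℝ) + 1) * g y) :=
      hmf.sub (hmg.const_mul _)
    have h0 := hopf_maximal hT hmeasb hint
    have hsplit : ∫ x in E c, (f x - ((c : ℝ) + 1) * g x) ∂μ
        = (∫ x in E c, f x ∂μ) - ((c : ℝ) + 1) * ∫ x in E c, g x ∂μ := by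
      rw [integral_sub hf.integrableOn ((hg.integrableOn).const_mul _), integral_const_mul]
    have hEf : ∫ x in E c, f x ∂μ ≤ ∫ x, f x ∂μ := setIntegral_le_integral hf hfnn
    have h0' : 0 ≤ ∫ x in E c, (f x - ((c : ℝ) + 1) * g x) ∂μ := h0
    linarith
  have hEmeas : ∀ c, MeasurableSet (E c) := by
    intro c
    have : E c = ⋃ n, {x | 1 ≤ n ∧ 0 < birkhoffSum T (fun y => f y - ((c : ℝ) + 1) * g y) n x} := by
      ext x; simp [hE, Set.mem_iUnion]
    rw [this]
    refine MeasurableSet.iUnion fun n => ?_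
    by_cases hn : 1 ≤ n
    · simp only [hn, true_and]
      exact measurableSet_lt measurable_const
        (measurable_birkhoffSum hT.measurable (hmf.sub (hmg.const_mul _)) n)
    · simp [hn]
  set D := ⋂ c, E c with hD
  have hDE : ∀ c, D ⊆ E c := fun c => Set.iInter_subset _ c
  have hDg : ∀ c : ℕ, ((c : ℝ) + 1) * ∫ x in D, g x ∂μ ≤ ∫ x, f x ∂μ := by
    intro c
    have hsub : ∫ x in D, g x ∂μ ≤ ∫ x in E c, g x ∂μ :=
      setIntegral_mono_set hg.integrableOn (ae_restrict_of_ae hgnn)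
        (HasSubset.Subset.eventuallyLE (hDE c))
    have : ((c : ℝ) + 1) * ∫ x in D, g x ∂μ ≤ ((c : ℝ) + 1) * ∫ x in E c, g x ∂μ := by
      apply mul_le_mul_of_nonneg_left hsub; positivity
    exact this.trans (hbound c)
  have hDg0 : ∫ x in D, g x ∂μ = 0 := by
    have hnn : 0 ≤ ∫ x in D, g x ∂μ :=
      integral_nonneg_of_ae (ae_restrict_of_ae hgnn)
    rcases eq_or_lt_of_le hnn with hI | hI
    · exact hI.symm
    · exfalso
      obtain ⟨c, hc⟩ := exists_nat_gt ((∫ x, f x ∂μ) / (∫ x in D, g x ∂μ))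
      have h1 : (∫ x, f x ∂μ) < ((c : ℝ) + 1) * ∫ x in D, g x ∂μ := by
        rw [div_lt_iff₀ hI] at hc
        nlinarith
      linarith [hDg c]
  have hμD : μ D = 0 := by
    by_contra hD0
    have hDmeas : MeasurableSet D := MeasurableSet.iInter hEmeas
    have hpos : 0 < ∫ x in D, g x ∂μ := by
      rw [setIntegral_pos_iff_support_of_nonneg_ae (ae_restrict_of_ae hgnn) hg.integrableOn]
      have hcompl : μ (D \ Function.support g) = 0 := by
        have hsub : D \ Function.support g ⊆ {x | ¬ 0 < g x} := by
          intro x hx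
          simp only [Set.mem_diff, Function.mem_support, not_not] at hx
          simp [hx.2]
        exact measure_mono_null hsub (ae_iff.mp hgpos)
      have hsplit : μ D ≤ μ (Function.support g ∩ D) + μ (D \ Function.support g) := by
        refine (measure_mono ?_).trans (measure_union_le _ _)
        intro x hx
        by_cases hs : x ∈ Function.support g
        · exact Or.inl ⟨hs, hx⟩
        · exact Or.inr ⟨hx, hs⟩
      rw [hcompl, add_zero] at hsplit
      exact lt_of_lt_of_le (pos_iff_ne_zero.mpr hD0) hsplit
    linarith
  have hae : ∀ᵐ x ∂μ, x ∉ D := by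
    rw [ae_iff]
    simpa using hμD
  filter_upwards [hae] with x hx
  simp only [hD, Set.mem_iInter, not_forall] at hx
  obtain ⟨c, hc⟩ := hx
  refine ⟨c, fun n hn => ?_⟩
  simp only [hE, Set.mem_setOf_eq, not_exists] at hc
  have := hc n
  rw [hlin] at this
  push_neg at this
  linarith [this hn]

end HopfAux

/-- For `f, g ∈ L¹` positive a.e., almost everywhere
`0 < liminf Sₙf/Sₙg` and `limsup Sₙf/Sₙg < +∞`. -/
theorem liminf_pos_limsup_lt_top {X : Type*} [MeasurableSpace X] (μ : Measure X)
    [SigmaFinite μ] (T : X → X) (hT : MeasurePreserving T μ μ) (hcons : IsConservative T μ)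
    (f g : X → ℝ) (hf : Integrable f μ) (hg : Integrable g μ)
    (hfpos : ∀ᵐ x ∂μ, 0 < f x) (hgpos : ∀ᵐ x ∂μ, 0 < g x) :
    ∀ᵐ x ∂μ,
      0 < liminf (fun n => ((birkhoff T f n x / birkhoff T g n x : ℝ) : EReal)) atTop ∧
      limsup (fun n => ((birkhoff T f n x / birkhoff T g n x : ℝ) : EReal)) atTop < ⊤ := by
  -- measurable representatives
  set f' := hf.aestronglyMeasurable.mk f with hf'def
  set g' := hg.aestronglyMeasurable.mk g with hg'def
  have hf'meas : Measurable f' := hf.aestronglyMeasurable.stronglyMeasurable_mk.measurable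
  have hg'meas : Measurable g' := hg.aestronglyMeasurable.stronglyMeasurable_mk.measurable
  have hfeq : f =ᵐ[μ] f' := hf.aestronglyMeasurable.ae_eq_mk
  have hgeq : g =ᵐ[μ] g' := hg.aestronglyMeasurable.ae_eq_mk
  have hf'int : Integrable f' μ := hf.congr hfeq
  have hg'int : Integrable g' μ := hg.congr hgeq
  have hf'pos : ∀ᵐ x ∂μ, 0 < f' x := by
    filter_upwards [hfpos, hfeq] with x h1 h2; rw [← h2]; exact h1
  have hg'pos : ∀ᵐ x ∂μ, 0 < g' x := by
    filter_upwards [hgpos, hgeq] with x h1 h2; rw [← h2]; exact h1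
  -- the two maximal-lemma bounds
  have h1 := ae_exists_bound hT hf'meas hg'meas hf'int hg'int hf'pos hg'pos
  have h2 := ae_exists_bound hT hg'meas hf'meas hg'int hf'int hg'pos hf'pos
  -- a.e. along-orbit properties
  have horbit : ∀ᵐ x ∂μ, ∀ k : ℕ,
      f (T^[k] x) = f' (T^[k] x) ∧ g (T^[k] x) = g' (T^[k] x) ∧
      0 < f' (T^[k] x) ∧ 0 < g' (T^[k] x) := by
    rw [ae_all_iff]
    intro k
    have hgood : ∀ᵐ y ∂μ, f y = f' y ∧ g y = g' y ∧ 0 < f' y ∧ 0 < g' y := by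
      filter_upwards [hfeq, hgeq, hf'pos, hg'pos] with y a b c d
      exact ⟨a, b, c, d⟩
    have hnull : μ {y | ¬ (f y = f' y ∧ g y = g' y ∧ 0 < f' y ∧ 0 < g' y)} = 0 :=
      ae_iff.mp hgood
    have hpre := (hT.iterate k).quasiMeasurePreserving.preimage_null hnull
    rw [ae_iff]
    exact hpre
  filter_upwards [h1, h2, horbit] with x hx1 hx2 hxo
  obtain ⟨c1, hc1⟩ := hx1
  obtain ⟨c2, hc2⟩ := hx2
  -- transfer birkhoff sums to the representatives
  have hbf : ∀ n, birkhoff T f n x = birkhoffSum T f' n x := fun n =>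
    Finset.sum_congr rfl fun k _ => (hxo k).1
  have hbg : ∀ n, birkhoff T g n x = birkhoffSum T g' n x := fun n =>
    Finset.sum_congr rfl fun k _ => (hxo k).2.1
  have hSf : ∀ n, 1 ≤ n → 0 < birkhoffSum T f' n x := fun n hn =>
    Finset.sum_pos (fun k _ => (hxo k).2.2.1)
      (Finset.nonempty_range_iff.mpr (Nat.one_le_iff_ne_zero.mp hn))
  have hSg : ∀ n, 1 ≤ n → 0 < birkhoffSum T g' n x := fun n hn =>
    Finset.sum_pos (fun k _ => (hxo k).2.2.2)
      (Finset.nonempty_range_iff.mpr (Nat.one_le_iff_ne_zero.mp hn))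
  have hM2 : (0 : ℝ) < (c2 : ℝ) + 1 := by positivity
  have hub : ∀ n, 1 ≤ n → birkhoff T f n x / birkhoff T g n x ≤ (c1 : ℝ) + 1 := by
    intro n hn
    rw [hbf, hbg, div_le_iff₀ (hSg n hn)]
    exact hc1 n hn
  have hlb : ∀ n, 1 ≤ n →
      (1 / ((c2 : ℝ) + 1)) ≤ birkhoff T f n x / birkhoff T g n x := by
    intro n hn
    rw [hbf, hbg, le_div_iff₀ (hSg n hn), one_div]
    have step : (1 / ((c2 : ℝ) + 1)) * birkhoffSum T g' n x
        ≤ (1 / ((c2 : ℝ) + 1)) * (((c2 : ℝ) + 1) * birkhoffSum T f' n x) := by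
      apply mul_le_mul_of_nonneg_left (hc2 n hn); positivity
    rw [one_div, inv_mul_cancel_left₀ (ne_of_gt hM2)] at step
    exact step
  constructor
  · have hle : ((1 / ((c2 : ℝ) + 1) : ℝ) : EReal)
        ≤ liminf (fun n => ((birkhoff T f n x / birkhoff T g n x : ℝ) : EReal)) atTop :=
      le_liminf_of_le (by isBoundedDefault)
        (eventually_atTop.mpr ⟨1, fun n hn => EReal.coe_le_coe_iff.mpr (hlb n hn)⟩)
    refine lt_of_lt_of_le ?_ hle
    exact_mod_cast one_div_pos.mpr hM2
  · have hle : limsup (fun n => ((birkhoff T f n x / birkhoff T g n x : ℝ) : EReal)) atTop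
        ≤ (((c1 : ℝ) + 1 : ℝ) : EReal) :=
      limsup_le_of_le (by isBoundedDefault)
        (eventually_atTop.mpr ⟨1, fun n hn => EReal.coe_le_coe_iff.mpr (hub n hn)⟩)
    exact lt_of_le_of_lt hle (EReal.coe_lt_top _)
end

section
/- Let (X, ℬ, μ, T) be a conservative, ergodic, measure-preserving transformation of a σ-finite measure space, and let f, g ∈ L¹(X, μ) with f > 0 and g > 0 μ-almost everywhere. Then the common value of liminf_{n→∞} S_n f / S_n g and limsup_{n→∞} S_n f / S_n g is μ-almost everywhere equal to the constant (∫_X f dμ)/(∫_X g dμ); in particular liminf_{n→∞} S_n f / S_n g ≥ (∫_X f dμ)/(∫_X g dμ) ≥ limsup_{n→∞} S_n f / S_n g μ-almost everywhere. -/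
/-!
Hopf's maximal inequality `0 ≤ ∫_{∃ n, S_n h > 0} h` shows that when `∫ h < 0` the set where
`S_n h` is unbounded above cannot have full measure; that set is strictly `T`-invariant, so by
ergodicity `S_n h` is a.e. bounded above. Applied to `h = q g - f` and `h = f - q g` for rational
`q` on either side of `∫ f / ∫ g`, and combined with `S_n g → ∞` (Poincaré recurrence to the sets
`{g > 1 / (m + 1)}`), this squeezes both the `liminf` and the `limsup` of `S_n f / S_n g` onto
`∫ f / ∫ g`.
-/

open MeasureTheory Filter Topology

open Set

lemma birkhoff_eq_birkhoffSum {X : Type*} (T : X → X) : birkhoff T = birkhoffSum T := rfl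

section Bridge

variable {X : Type*} [MeasurableSpace X] {μ : Measure X} {T : X → X}

lemma IsConservative.conservative (hcons : IsConservative T μ) (hT : MeasurePreserving T μ μ) :
    Conservative T μ where
  toQuasiMeasurePreserving := hT.quasiMeasurePreserving
  exists_mem_iterate_mem' s hs hs0 := by
    obtain ⟨n, hn, hpos⟩ := hcons s hs (pos_iff_ne_zero.mpr hs0)
    obtain ⟨x, hx, hnx⟩ := nonempty_of_measure_ne_zero hpos.ne'
    exact ⟨x, hx, n, by omega, hnx⟩

lemma MeasureTheory.MeasurePreserving.ergodic_of_measure_eq_zero_or_compl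
    (hT : MeasurePreserving T μ μ)
    (herg : ∀ A : Set X, MeasurableSet A → T ⁻¹' A = A → μ A = 0 ∨ μ Aᶜ = 0) :
    Ergodic T μ where
  toMeasurePreserving := hT
  aeconst_set s hs hinv := eventuallyConst_set.mpr <|
    (herg s hs hinv).symm.imp ae_iff.mpr measure_eq_zero_iff_ae_notMem.mp

end Bridge

section BirkhoffSum

variable {X : Type*} {T : X → X} {h : X → ℝ}

/-- `birkhoffMax T h N x = max_{k ≤ N} birkhoffSum T h k x`; the recursion
`M_{N+1} = max 0 (h + M_N ∘ T)` is what drives Hopf's maximal inequality. -/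
noncomputable def birkhoffMax (T : X → X) (h : X → ℝ) : ℕ → X → ℝ
  | 0 => 0
  | N + 1 => fun x => max 0 (h x + birkhoffMax T h N (T x))

lemma birkhoffMax_nonneg (N : ℕ) (x : X) : 0 ≤ birkhoffMax T h N x := by
  cases N
  exacts [le_rfl, le_max_left _ _]

lemma birkhoffMax_le_succ (N : ℕ) (x : X) : birkhoffMax T h N x ≤ birkhoffMax T h (N + 1) x := by
  induction N generalizing x with
  | zero => exact birkhoffMax_nonneg 1 x
  | succ N ih =>
    simp only [birkhoffMax]
    gcongr
    exact ih (T x)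

lemma birkhoffSum_le_birkhoffMax {k N : ℕ} (hk : k ≤ N) (x : X) :
    birkhoffSum T h k x ≤ birkhoffMax T h N x := by
  induction N generalizing k x with
  | zero =>
    obtain rfl : k = 0 := by omega
    simp [birkhoffMax]
  | succ N ih =>
    cases k with
    | zero => simpa using birkhoffMax_nonneg (N + 1) x
    | succ k =>
      rw [birkhoffSum_succ']
      exact (add_le_add_right (ih (k := k) (by omega) (T x)) _).trans (le_max_right _ _)

lemma exists_birkhoffSum_eq_birkhoffMax (N : ℕ) (x : X) :
    ∃ k, birkhoffSum T h k x = birkhoffMax T h N x := by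
  induction N generalizing x with
  | zero => exact ⟨0, birkhoffSum_zero _ _ _⟩
  | succ N ih =>
    obtain ⟨k, hk⟩ := ih (T x)
    rcases max_choice 0 (h x + birkhoffMax T h N (T x)) with hmax | hmax
    · exact ⟨0, by simp [birkhoffMax, hmax]⟩
    · exact ⟨k + 1, by simp [birkhoffMax, hmax, birkhoffSum_succ', hk]⟩

lemma birkhoffMax_sub_comp_le_indicator (N : ℕ) (x : X) :
    birkhoffMax T h N x - birkhoffMax T h N (T x)
      ≤ {y | 0 < birkhoffMax T h N y}.indicator h x := by
  cases N with
  | zero => simp [birkhoffMax]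
  | succ N =>
    by_cases hx : 0 < birkhoffMax T h (N + 1) x
    · have hmax : birkhoffMax T h (N + 1) x = h x + birkhoffMax T h N (T x) :=
        max_eq_right (lt_max_iff.mp hx |>.resolve_left (lt_irrefl 0)).le
      rw [indicator_of_mem (show x ∈ {y | 0 < birkhoffMax T h (N + 1) y} from hx), hmax]
      linarith [birkhoffMax_le_succ (T := T) (h := h) N (T x)]
    · rw [indicator_of_notMem (show x ∉ {y | 0 < birkhoffMax T h (N + 1) y} from hx)]
      linarith [birkhoffMax_nonneg (T := T) (h := h) (N + 1) (T x), not_lt.mp hx]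

lemma bddAbove_range_birkhoffSum_apply_iff (x : X) :
    BddAbove (range fun n => birkhoffSum T h n (T x))
      ↔ BddAbove (range fun n => birkhoffSum T h n x) := by
  simp only [bddAbove_def, forall_mem_range]
  constructor
  · rintro ⟨M, hM⟩
    refine ⟨max 0 (h x + M), fun n => ?_⟩
    cases n with
    | zero => simp
    | succ n =>
      rw [birkhoffSum_succ']
      exact (add_le_add_right (hM n) _).trans (le_max_right _ _)
  · rintro ⟨M, hM⟩
    exact ⟨M - h x, fun n => by linarith [hM (n + 1), birkhoffSum_succ' T h n x]⟩

end BirkhoffSum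

section Maximal

variable {X : Type*} [MeasurableSpace X] {μ : Measure X} {T : X → X} {h : X → ℝ}

lemma measurable_birkhoffMax (hT : Measurable T) (hh : Measurable h) (N : ℕ) :
    Measurable (birkhoffMax T h N) := by
  induction N with
  | zero => exact measurable_const
  | succ N ih => exact measurable_const.max (hh.add (ih.comp hT))

lemma integrable_birkhoffMax (hT : MeasurePreserving T μ μ) (hh : Integrable h μ) (N : ℕ) :
    Integrable (birkhoffMax T h N) μ := by
  induction N with
  | zero => exact integrable_zero _ _ _
  | succ N ih => exact (integrable_zero _ _ _).sup (hh.add (hT.integrable_comp_of_integrable ih))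

lemma setIntegral_birkhoffMax_pos_nonneg (hT : MeasurePreserving T μ μ) (hm : Measurable h)
    (hi : Integrable h μ) (N : ℕ) :
    0 ≤ ∫ x in {x | 0 < birkhoffMax T h N x}, h x ∂μ := by
  have hMm := measurable_birkhoffMax hT.measurable hm N
  have hMi := integrable_birkhoffMax hT hi N
  have hMTi : Integrable (fun x => birkhoffMax T h N (T x)) μ :=
    hT.integrable_comp_of_integrable hMi
  have hE : MeasurableSet {x | 0 < birkhoffMax T h N x} := measurableSet_lt measurable_const hMm
  have hcomp : ∫ x, birkhoffMax T h N (T x) ∂μ = ∫ x, birkhoffMax T h N x ∂μ := by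
    rw [← hT.map_eq, integral_map hT.measurable.aemeasurable hMm.aestronglyMeasurable, hT.map_eq]
  calc 0 = ∫ x, (birkhoffMax T h N x - birkhoffMax T h N (T x)) ∂μ := by
        rw [integral_sub hMi hMTi, hcomp, sub_self]
    _ ≤ ∫ x, {y | 0 < birkhoffMax T h N y}.indicator h x ∂μ :=
        integral_mono (hMi.sub hMTi) (hi.indicator hE)
          (birkhoffMax_sub_comp_le_indicator N)
    _ = _ := integral_indicator hE

theorem MeasureTheory.MeasurePreserving.setIntegral_exists_birkhoffSum_pos_nonneg
    (hT : MeasurePreserving T μ μ) (hm : Measurable h) (hi : Integrable h μ) :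
    0 ≤ ∫ x in {x | ∃ n, 0 < birkhoffSum T h n x}, h x ∂μ := by
  have hunion : {x | ∃ n, 0 < birkhoffSum T h n x} = ⋃ N, {x | 0 < birkhoffMax T h N x} := by
    ext x
    simp only [mem_ofPred_eq, mem_iUnion]
    constructor
    · exact fun ⟨n, hn⟩ => ⟨n, hn.trans_le (birkhoffSum_le_birkhoffMax le_rfl x)⟩
    · rintro ⟨N, hN⟩
      obtain ⟨k, hk⟩ := exists_birkhoffSum_eq_birkhoffMax (T := T) (h := h) N x
      exact ⟨k, hk ▸ hN⟩
  have hmono : Monotone fun N => {x | 0 < birkhoffMax T h N x} :=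
    monotone_nat_of_le_succ fun N x hx => hx.trans_le (birkhoffMax_le_succ N x)
  rw [hunion]
  exact ge_of_tendsto' (tendsto_setIntegral_of_monotone
    (fun N => measurableSet_lt measurable_const (measurable_birkhoffMax hT.measurable hm N))
    hmono hi.integrableOn) (setIntegral_birkhoffMax_pos_nonneg hT hm hi)

end Maximal

section Ergodic

variable {X : Type*} [MeasurableSpace X] {μ : Measure X} {T : X → X} {f g h : X → ℝ}

lemma integral_pos_of_ae_pos [NeZero μ] (hg : Integrable g μ) (hpos : ∀ᵐ x ∂μ, 0 < g x) :
    0 < ∫ x, g x ∂μ := by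
  rw [integral_pos_iff_support_of_nonneg_ae (hpos.mono fun x hx => hx.le) hg]
  have hsupp : Function.support g =ᵐ[μ] univ :=
    eventuallyEq_univ.mpr (hpos.mono fun x hx => Function.mem_support.mpr hx.ne')
  rw [measure_congr hsupp]
  exact Measure.measure_univ_pos.mpr (NeZero.ne μ)

lemma Ergodic.ae_bddAbove_birkhoffSum_of_measurable (hT : Ergodic T μ) (hm : Measurable h)
    (hi : Integrable h μ) (hneg : ∫ x, h x ∂μ < 0) :
    ∀ᵐ x ∂μ, BddAbove (range fun n => birkhoffSum T h n x) := by
  set F := {x | BddAbove (range fun n => birkhoffSum T h n x)}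
  have hF : MeasurableSet F := measurableSet_bddAbove_range fun n =>
    Finset.measurable_sum _ fun k _ => hm.comp (hT.measurable.iterate k)
  have hinv : T ⁻¹' F = F := ext fun x => bddAbove_range_birkhoffSum_apply_iff x
  rcases hT.measure_self_or_compl_eq_zero hF hinv with hF0 | hFc
  · set E := {x | ∃ n, 0 < birkhoffSum T h n x}
    have hFE : Fᶜ ⊆ E := fun x hx => by
      obtain ⟨_, ⟨n, rfl⟩, hn⟩ := not_bddAbove_iff.mp hx 0
      exact ⟨n, hn⟩
    have hE : E =ᵐ[μ] univ := ae_eq_univ.mpr (measure_mono_null (compl_subset_comm.mp hFE) hF0)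
    have := hT.toMeasurePreserving.setIntegral_exists_birkhoffSum_pos_nonneg hm hi
    rw [setIntegral_congr_set hE, setIntegral_univ] at this
    exact absurd hneg this.not_gt
  · exact ae_iff.mpr hFc

theorem Ergodic.ae_bddAbove_birkhoffSum (hT : Ergodic T μ) (hi : Integrable h μ)
    (hneg : ∫ x, h x ∂μ < 0) :
    ∀ᵐ x ∂μ, BddAbove (range fun n => birkhoffSum T h n x) := by
  have hmk := hi.aemeasurable.ae_eq_mk
  have hsum : ∀ᵐ x ∂μ, ∀ n, birkhoffSum T h n x = birkhoffSum T (hi.aemeasurable.mk h) n x :=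
    ae_all_iff.mpr fun n => hT.quasiMeasurePreserving.birkhoffSum_ae_eq_of_ae_eq hmk n
  filter_upwards [hsum, hT.ae_bddAbove_birkhoffSum_of_measurable hi.aemeasurable.measurable_mk
    (hi.congr hmk) (by rwa [← integral_congr_ae hmk])] with x hx hbdd
  simpa only [hx] using hbdd

theorem Ergodic.ae_forall_rat_bddAbove_mul_birkhoffSum_sub (hT : Ergodic T μ)
    (hf : Integrable f μ) (hg : Integrable g μ) :
    ∀ᵐ x ∂μ, ∀ q : ℚ, q * ∫ x, g x ∂μ < ∫ x, f x ∂μ →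
      BddAbove (range fun n => q * birkhoffSum T g n x - birkhoffSum T f n x) := by
  refine ae_all_iff.mpr fun q => eventually_imp_distrib_left.mpr fun hq => ?_
  have hneg : ∫ x, (q * g x - f x) ∂μ < 0 := by
    rwa [integral_sub (hg.const_mul q) hf, integral_const_mul, sub_neg]
  filter_upwards [hT.ae_bddAbove_birkhoffSum ((hg.const_mul q).sub hf) hneg] with x hx
  simpa [birkhoffSum, Finset.mul_sum] using hx

end Ergodic

lemma tendsto_sum_range_atTop_of_frequently_lt {a : ℕ → ℝ} {ε : ℝ} (hε : 0 < ε)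
    (ha : ∀ n, 0 ≤ a n) (hfreq : ∃ᶠ n in atTop, ε < a n) :
    Tendsto (fun n => ∑ k ∈ Finset.range n, a k) atTop atTop := by
  rw [← not_summable_iff_tendsto_nat_atTop_of_nonneg ha]
  intro hsum
  exact hfreq ((hsum.tendsto_atTop_zero.eventually (gt_mem_nhds hε)).mono fun n hn => hn.not_gt)

section Conservative

variable {X : Type*} [MeasurableSpace X] {μ : Measure X} {T : X → X} {g : X → ℝ}

theorem MeasureTheory.Conservative.ae_tendsto_birkhoffSum_atTop (hT : Conservative T μ)
    (hg : AEMeasurable g μ) (hpos : ∀ᵐ x ∂μ, 0 < g x) :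
    ∀ᵐ x ∂μ, Tendsto (fun n => birkhoffSum T g n x) atTop atTop := by
  have horbit : ∀ᵐ x ∂μ, ∀ k, 0 < g (T^[k] x) :=
    ae_all_iff.mpr fun k => (hT.toQuasiMeasurePreserving.iterate k).ae hpos
  have hrec : ∀ᵐ x ∂μ, ∀ m : ℕ,
      1 / (m + 1 : ℝ) < g x → ∃ᶠ n in atTop, 1 / (m + 1 : ℝ) < g (T^[n] x) :=
    ae_all_iff.mpr fun m =>
      hT.ae_mem_imp_frequently_image_mem (nullMeasurableSet_lt aemeasurable_const hg)
  filter_upwards [horbit, hrec] with x hx hxrec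
  obtain ⟨m, hm⟩ := exists_nat_one_div_lt (hx 0)
  exact tendsto_sum_range_atTop_of_frequently_lt (by positivity) (fun k => (hx k).le)
    (hxrec m hm)

end Conservative

section Ratio

variable {ι : Type*} {l : Filter ι} {u v : ι → ℝ} {r : ℝ}

lemma eventually_le_div_of_bddAbove {q q' : ℝ} (hv : Tendsto v l atTop) (hqq' : q < q')
    (hbdd : BddAbove (range fun n => q' * v n - u n)) : ∀ᶠ n in l, q ≤ u n / v n := by
  obtain ⟨M, hM⟩ := hbdd
  filter_upwards [hv.eventually_gt_atTop 0,
    (hv.const_mul_atTop (sub_pos.mpr hqq')).eventually_ge_atTop M] with n hvn hMn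
  rw [le_div_iff₀ hvn]
  linarith [hM (mem_range_self n)]

lemma le_liminf_div_of_forall_rat (hv : Tendsto v l atTop)
    (h : ∀ q : ℚ, (q : ℝ) < r → BddAbove (range fun n => q * v n - u n)) :
    (r : EReal) ≤ liminf (fun n => ((u n / v n : ℝ) : EReal)) l := by
  refine le_of_forall_lt_imp_le_of_dense fun c hc => ?_
  obtain ⟨q, hcq, hqr⟩ := EReal.exists_rat_btwn_of_lt hc
  obtain ⟨q', hqq', hq'r⟩ := exists_rat_btwn (EReal.coe_lt_coe_iff.mp hqr)
  refine hcq.le.trans (le_liminf_of_le (by isBoundedDefault) ?_)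
  exact (eventually_le_div_of_bddAbove hv (by exact_mod_cast hqq') (h q' hq'r)).mono
    fun n hn => EReal.coe_le_coe_iff.mpr hn

lemma limsup_div_le_of_forall_rat (hv : Tendsto v l atTop)
    (h : ∀ q : ℚ, r < q → BddAbove (range fun n => u n - q * v n)) :
    limsup (fun n => ((u n / v n : ℝ) : EReal)) l ≤ r := by
  have hneg := le_liminf_div_of_forall_rat (u := -u) (r := -r) hv fun q hq => by
    simpa [sub_eq_add_neg, add_comm] using h (-q) (by push_cast; linarith)
  rw [← EReal.neg_le_neg_iff, ← EReal.liminf_neg]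
  simpa [neg_div, Pi.neg_def] using hneg

end Ratio

section RatioErgodic

variable {X : Type*} [MeasurableSpace X] {μ : Measure X} {T : X → X} {f g : X → ℝ}

theorem Ergodic.ae_le_liminf_and_limsup_le_birkhoffSum_div (hT : Ergodic T μ)
    (hcons : Conservative T μ) (hf : Integrable f μ) (hg : Integrable g μ)
    (hgpos : ∀ᵐ x ∂μ, 0 < g x) :
    ∀ᵐ x ∂μ,
      (((∫ x, f x ∂μ) / (∫ x, g x ∂μ) : ℝ) : EReal)
          ≤ liminf (fun n => ((birkhoffSum T f n x / birkhoffSum T g n x : ℝ) : EReal)) atTop ∧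
      limsup (fun n => ((birkhoffSum T f n x / birkhoffSum T g n x : ℝ) : EReal)) atTop
          ≤ (((∫ x, f x ∂μ) / (∫ x, g x ∂μ) : ℝ) : EReal) := by
  rcases eq_zero_or_neZero μ with rfl | _
  · simp
  have hgint := integral_pos_of_ae_pos hg hgpos
  -- the upper bound is the lower bound for `-f` and `-g`
  filter_upwards [hT.ae_forall_rat_bddAbove_mul_birkhoffSum_sub hf hg,
    hT.ae_forall_rat_bddAbove_mul_birkhoffSum_sub hf.neg hg.neg,
    hcons.ae_tendsto_birkhoffSum_atTop hg.aemeasurable hgpos] with x hxl hxu hxd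
  refine ⟨le_liminf_div_of_forall_rat hxd fun q hq => hxl q ((lt_div_iff₀ hgint).mp hq),
    limsup_div_le_of_forall_rat hxd fun q hq => ?_⟩
  simpa [birkhoffSum_neg, integral_neg, sub_eq_add_neg, add_comm] using
    hxu q (by simpa [integral_neg] using (div_lt_iff₀ hgint).mp hq)

end RatioErgodic

theorem liminf_limsup_eq_const_general {X : Type*} [MeasurableSpace X] (μ : Measure X)
    (T : X → X) (hT : MeasurePreserving T μ μ) (hcons : IsConservative T μ)
    (herg : ∀ A : Set X, MeasurableSet A → T ⁻¹' A = A → μ A = 0 ∨ μ Aᶜ = 0)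
    (f g : X → ℝ) (hf : Integrable f μ) (hg : Integrable g μ)
    (hgpos : ∀ᵐ x ∂μ, 0 < g x) :
    (∀ᵐ x ∂μ,
      liminf (fun n => ((birkhoff T f n x / birkhoff T g n x : ℝ) : EReal)) atTop
        = (((∫ x, f x ∂μ) / (∫ x, g x ∂μ) : ℝ) : EReal) ∧
      limsup (fun n => ((birkhoff T f n x / birkhoff T g n x : ℝ) : EReal)) atTop
        = (((∫ x, f x ∂μ) / (∫ x, g x ∂μ) : ℝ) : EReal)) ∧
    (∀ᵐ x ∂μ,
      (((∫ x, f x ∂μ) / (∫ x, g x ∂μ) : ℝ) : EReal)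
          ≤ liminf (fun n => ((birkhoff T f n x / birkhoff T g n x : ℝ) : EReal)) atTop ∧
      limsup (fun n => ((birkhoff T f n x / birkhoff T g n x : ℝ) : EReal)) atTop
          ≤ (((∫ x, f x ∂μ) / (∫ x, g x ∂μ) : ℝ) : EReal)) := by
  simp only [birkhoff_eq_birkhoffSum]
  have hbounds := (hT.ergodic_of_measure_eq_zero_or_compl herg)
    |>.ae_le_liminf_and_limsup_le_birkhoffSum_div (hcons.conservative hT) hf hg hgpos
  refine ⟨hbounds.mono fun x hx => ?_, hbounds⟩
  exact ⟨le_antisymm (le_trans liminf_le_limsup hx.2) hx.1,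
    le_antisymm hx.2 (le_trans hx.1 liminf_le_limsup)⟩

/-- In the ergodic case with `f, g ∈ L¹` positive a.e., the liminf and limsup of
`Sₙf/Sₙg` are a.e. equal to the constant `(∫f)/(∫g)`; in particular
`liminf ≥ (∫f)/(∫g) ≥ limsup` a.e. -/
theorem liminf_limsup_eq_const {X : Type*} [MeasurableSpace X] (μ : Measure X)
    [SigmaFinite μ] (T : X → X) (hT : MeasurePreserving T μ μ) (hcons : IsConservative T μ)
    (herg : ∀ A : Set X, MeasurableSet A → T ⁻¹' A = A → μ A = 0 ∨ μ Aᶜ = 0)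
    (f g : X → ℝ) (hf : Integrable f μ) (hg : Integrable g μ)
    (hfpos : ∀ᵐ x ∂μ, 0 < f x) (hgpos : ∀ᵐ x ∂μ, 0 < g x) :
    (∀ᵐ x ∂μ,
      liminf (fun n => ((birkhoff T f n x / birkhoff T g n x : ℝ) : EReal)) atTop
        = (((∫ x, f x ∂μ) / (∫ x, g x ∂μ) : ℝ) : EReal) ∧
      limsup (fun n => ((birkhoff T f n x / birkhoff T g n x : ℝ) : EReal)) atTop
        = (((∫ x, f x ∂μ) / (∫ x, g x ∂μ) : ℝ) : EReal)) ∧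
    (∀ᵐ x ∂μ,
      (((∫ x, f x ∂μ) / (∫ x, g x ∂μ) : ℝ) : EReal)
          ≤ liminf (fun n => ((birkhoff T f n x / birkhoff T g n x : ℝ) : EReal)) atTop ∧
      limsup (fun n => ((birkhoff T f n x / birkhoff T g n x : ℝ) : EReal)) atTop
          ≤ (((∫ x, f x ∂μ) / (∫ x, g x ∂μ) : ℝ) : EReal)) :=
  liminf_limsup_eq_const_general μ T hT hcons herg f g hf hg hgpos
end
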